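/- Let (R,m,K) be a complete Noetherian local ring of prime characteristic p possessing a test element, and let M be an Artinian R-module. Let τ^{fg}_M = {f ∈ M^∨ : f(0*fg_M) = 0} be the annihilator in the Matlis dual M^∨ of the finitistic tight closure of zero in M. Then for every ideal I of R one has I* · τ^{fg}_M = I · τ^{fg}_M (as submodules of M^∨). -/

import Mathlib

open scoped TensorProduct Pointwise

universe u v w

section TightClosureDefs

variable (R : Type u) [CommRing R] (p : ℕ)

/-- `R^o`: the complement of the union of the minimal primes of `R`. -/
def Ro : Set R := {c | ∀ P ∈ minimalPrimes R, c ∉ P}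

/-- The Frobenius power `I^{[q]}` of an ideal: the ideal generated by the `q`-th
powers of the elements of `I`. -/
def frobeniusPower (I : Ideal R) (q : ℕ) : Ideal R :=
  Ideal.span ((fun x => x ^ q) '' (I : Set R))

/-- The tight closure `I*` of an ideal `I`: all `x` such that `c x^q ∈ I^{[q]}` for some
`c ∈ R^o` and all `q = p^e ≫ 0`. -/
def idealTC (I : Ideal R) : Set R :=
  {x | ∃ c ∈ Ro R, ∃ e₀ : ℕ, ∀ e ≥ e₀, c * x ^ p ^ e ∈ frobeniusPower R I (p ^ e)}

/-- `R^e`: `R` viewed as an `R`-algebra via the `e`-th iterated Frobenius `r ↦ r^{p^e}`. -/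
def FrobAlg (R : Type u) [CommRing R] (_p _e : ℕ) : Type u := R

instance FrobAlg.instCommRing (e : ℕ) : CommRing (FrobAlg R p e) := inferInstanceAs (CommRing R)

noncomputable instance FrobAlg.instAlgebra (e : ℕ) [ExpChar R p] : Algebra R (FrobAlg R p e) :=
  (iterateFrobenius R p e).toAlgebra

/-- The identity map of `R` into `FrobAlg R p e`. -/
def FrobAlg.mk (e : ℕ) : R → FrobAlg R p e := id

variable [ExpChar R p]

/-- `N^{[p^e]}_M`: the image of `F^e(N) → F^e(M)`, where `F^e(M) = R^e ⊗_R M` is the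
`e`-th Frobenius functor. -/
noncomputable def submoduleFrobPow {M : Type v} [AddCommGroup M] [Module R M]
    (N : Submodule R M) (e : ℕ) : Submodule R (FrobAlg R p e ⊗[R] M) :=
  LinearMap.range (LinearMap.lTensor (FrobAlg R p e) N.subtype)

/-- The tight closure `N*_M` of a submodule `N ⊆ M`: all `m` such that
`c ⊗ m ∈ N^{[q]}_M` for some `c ∈ R^o` and all `q = p^e ≫ 0`. -/
noncomputable def moduleTC {M : Type v} [AddCommGroup M] [Module R M]
    (N : Submodule R M) : Set M :=
  {m | ∃ c ∈ Ro R, ∃ e₀ : ℕ, ∀ e ≥ e₀,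
    (FrobAlg.mk R p e c) ⊗ₜ[R] m ∈ submoduleFrobPow R p N e}

/-- The finitistic tight closure `N*fg_M`: the union of `(N ∩ M')*_{M'}` over all
finitely generated submodules `M' ⊆ M`. -/
noncomputable def finitisticTC {M : Type v} [AddCommGroup M] [Module R M]
    (N : Submodule R M) : Set M :=
  ⋃ (M' : Submodule R M) (_ : M'.FG),
    (M'.subtype '' moduleTC R p (N.comap M'.subtype))

/-- A test element: `c ∈ R^o` such that `c I* ⊆ I` for every ideal `I`. -/
def IsTestElement (c : R) : Prop :=
  c ∈ Ro R ∧ ∀ I : Ideal R, ∀ x ∈ idealTC R p I, c * x ∈ I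

/-- A module test element: `c ∈ R^o` such that for every finitely generated module `M`,
every submodule `N ⊆ M`, every `x ∈ N*_M` and every `q = p^e`, `c ⊗ x ∈ N^{[q]}_M`. -/
def IsModuleTestElement (c : R) : Prop :=
  c ∈ Ro R ∧ ∀ (M : Type u) [AddCommGroup M] [Module R M], Module.Finite R M →
    ∀ (N : Submodule R M), ∀ x ∈ moduleTC R p N, ∀ e : ℕ,
      (FrobAlg.mk R p e c) ⊗ₜ[R] x ∈ submoduleFrobPow R p N e

/-- The annihilator, inside the Matlis-type dual `Hom_R(M, E)`, of a subset `S ⊆ M`. -/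
def annihilatorIn {M : Type v} {E : Type w} [AddCommGroup M] [Module R M]
    [AddCommGroup E] [Module R E] (S : Set M) : Submodule R (M →ₗ[R] E) where
  carrier := {f | ∀ x ∈ S, f x = 0}
  add_mem' := by intro f g hf hg x hx; simp [hf x hx, hg x hx]
  zero_mem' := by intro x hx; simp
  smul_mem' := by intro r f hf x hx; simp [hf x hx]

/-- The product `s · T` of a set of ring elements and a submodule: the submodule
generated by all products `a • t` with `a ∈ s`, `t ∈ T`. -/
def setSMulSubmodule {M : Type v} [AddCommGroup M] [Module R M]
    (s : Set R) (T : Submodule R M) : Submodule R M :=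
  Submodule.span R (s • (T : Set M))

/-- `E` is an injective hull of `M` over `R`: `E` is an injective module admitting an
essential embedding of `M`. -/
def IsInjectiveHull (M : Type v) (E : Type w) [AddCommGroup M] [Module R M]
    [AddCommGroup E] [Module R E] : Prop :=
  Module.Injective R E ∧ ∃ ι : M →ₗ[R] E, Function.Injective ι ∧
    ∀ N : Submodule R E, N ≠ ⊥ → N ⊓ LinearMap.range ι ≠ ⊥

/-- The test ideal `τ(R) = ⋂_M Ann_R (0*_M)`, where `M` runs through all finitely
generated `R`-modules. -/
noncomputable def testIdeal : Ideal R where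
  carrier := {c | ∀ (M : Type u) [AddCommGroup M] [Module R M], Module.Finite R M →
    ∀ x ∈ moduleTC R p (⊥ : Submodule R M), c • x = 0}
  add_mem' := by
    intro a b ha hb M _ _ hfin x hx
    rw [add_smul, ha M hfin x hx, hb M hfin x hx, add_zero]
  zero_mem' := by intro M _ _ hfin x hx; rw [zero_smul]
  smul_mem' := by
    intro r a ha M _ _ hfin x hx
    rw [smul_eq_mul, mul_smul, ha M hfin x hx, smul_zero]

/-- An `F`-finite ring: `R` is finitely generated as a module over its subring of
`p`-th powers, i.e. `R^1` is a finite `R`-module. -/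
def IsFFinite : Prop := Module.Finite R (FrobAlg R p 1)

/-- An ideal generated by a system of parameters: generated by `dim R` elements and
with radical the maximal ideal (i.e. primary to the maximal ideal). -/
def IsParameterIdeal [IsLocalRing R] (I : Ideal R) : Prop :=
  ∃ (n : ℕ) (x : Fin n → R), ringKrullDim R = n ∧ I = Ideal.span (Set.range x) ∧
    I.radical = IsLocalRing.maximalIdeal R

/-- The parameter test ideal `τ_par(R) = ⋂_I (I : I*)`, where `I` runs through the
ideals generated by systems of parameters. -/
def parameterTestIdeal [IsLocalRing R] : Ideal R where
  carrier := {c | ∀ I : Ideal R, IsParameterIdeal R I → ∀ z ∈ idealTC R p I, c * z ∈ I}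
  add_mem' := by
    intro a b ha hb I hI z hz
    rw [add_mul]; exact I.add_mem (ha I hI z hz) (hb I hI z hz)
  zero_mem' := by intro I hI z hz; rw [zero_mul]; exact I.zero_mem
  smul_mem' := by
    intro r a ha I hI z hz
    rw [smul_eq_mul, mul_assoc]; exact I.mul_mem_left r (ha I hI z hz)

/-- A parameter test element: an element of `τ_par(R) ∩ R^o`. -/
def IsParameterTestElement [IsLocalRing R] (c : R) : Prop :=
  c ∈ parameterTestIdeal R p ∧ c ∈ Ro R

end TightClosureDefs

/-- A Cohen–Macaulay local ring: a local ring admitting a system of parameters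
(`dim R` elements generating an ideal whose radical is the maximal ideal, here expressed
as the Jacobson radical `(⊥).jacobson`) that is a regular sequence. -/
def IsCohenMacaulayLocalRing (R : Type u) [CommRing R] : Prop :=
  IsLocalRing R ∧ ∃ (n : ℕ) (x : Fin n → R), ringKrullDim R = n ∧
    (Ideal.span (Set.range x)).radical = (⊥ : Ideal R).jacobson ∧
    RingTheory.Sequence.IsRegular R (List.ofFn x)

/-! Write `N = 0*fg_M`. If `x ∈ I*` and `I u ⊆ N`, then `x u ∈ N`: as `I` is finitely generated
and `N` is a directed union, there are a finitely generated `M' ∋ u` and `c ∈ R^o` with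
`a^q c ⊗ u = c ⊗ a u = 0` in `F^e(M')` for all `a ∈ I` and `e ≫ 0`; hence `z c ⊗ u = 0` for
`z ∈ I^{[q]}`, and `d c ⊗ x u = d x^q c ⊗ u = 0` whenever `d x^q ∈ I^{[q]}`.
So for `f ∈ τ = Ann(N)` and `I = (a₁, …, aₙ)`, the map `x f` vanishes on the kernel of
`u ↦ (aᵢ u mod N)ᵢ : M → (M/N)ⁿ`. Extending along this map by injectivity of `E` gives
`G : (M/N)ⁿ → E`, and its components `gᵢ` lie in `τ` with `x f = ∑ aᵢ gᵢ`.

Injectivity of `E` only quantifies over modules in the universe of `E`; Baer's criterion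
transfers it to `(M/N)ⁿ` because `R` is as small as `K ⊆ E`, as `m`-adic separatedness embeds
`R` into `∏ₙ R/mⁿ`. -/

section Smallness

variable {R : Type u} [CommRing R]

theorem small_quotient_mul {I J : Ideal R} (hI : I.FG) [Small.{w} (R ⧸ I)] [Small.{w} (R ⧸ J)] :
    Small.{w} (R ⧸ I * J) := by
  obtain ⟨n, t, ht⟩ := Submodule.fg_iff_exists_fin_generating_family.1 hI
  refine small_of_surjective (f := fun v : (R ⧸ I) × (Fin n → R ⧸ J) =>
    Ideal.Quotient.mk (I * J) (v.1.out + ∑ k, (v.2 k).out * t k)) fun y => ?_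
  obtain ⟨r, rfl⟩ := Ideal.Quotient.mk_surjective y
  have hr : r - (Ideal.Quotient.mk I r).out ∈ Submodule.span R (Set.range t) := by
    rw [ht, ← Ideal.Quotient.eq, Ideal.Quotient.mk_out]
  obtain ⟨c, hc⟩ := (Submodule.mem_span_range_iff_exists_fun R).1 hr
  refine ⟨(Ideal.Quotient.mk I r, fun k => Ideal.Quotient.mk J (c k)), Ideal.Quotient.eq.2 ?_⟩
  have hdiff (k : Fin n) : (Ideal.Quotient.mk J (c k)).out - c k ∈ J := by
    rw [← Ideal.Quotient.eq, Ideal.Quotient.mk_out]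
  have ht (k : Fin n) : t k ∈ I := ht ▸ Submodule.subset_span (Set.mem_range_self k)
  have key : (Ideal.Quotient.mk I r).out + ∑ k, (Ideal.Quotient.mk J (c k)).out * t k - r =
      ∑ k, ((Ideal.Quotient.mk J (c k)).out - c k) * t k := by
    simp only [sub_mul, Finset.sum_sub_distrib, smul_eq_mul] at hc ⊢
    linear_combination hc
  exact key ▸ Ideal.sum_mem _ fun k _ => Ideal.mul_mem_mul_rev (ht k) (hdiff k)

theorem small_quotient_pow {m : Ideal R} (hm : m.FG) [Small.{w} (R ⧸ m)] :
    ∀ n : ℕ, Small.{w} (R ⧸ m ^ n)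
  | 0 => by
    rw [pow_zero, Ideal.one_eq_top]
    infer_instance
  | n + 1 => by
    have := small_quotient_pow hm n
    rw [pow_succ']
    exact small_quotient_mul hm

theorem small_of_isHausdorff {m : Ideal R} (hm : m.FG) [IsHausdorff m R] [Small.{w} (R ⧸ m)] :
    Small.{w} R :=
  have := small_quotient_pow hm
  small_of_injective (f := fun r (n : ℕ) => Ideal.Quotient.mk (m ^ n) r) fun a b hab =>
    congrFun (IsHausdorff.funext' m (f := fun _ : Unit => a) (g := fun _ => b)
      fun n _ => congrFun hab n) ()

end Smallness

theorem Submodule.FG.exists_le_of_le_iSup {R : Type u} {M : Type v} [Semiring R]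
    [AddCommMonoid M] [Module R M] {ι : Type w} [Nonempty ι] {S : ι → Submodule R M}
    (hS : Directed (· ≤ ·) S) {K : Submodule R M} (hK : K.FG) (h : K ≤ ⨆ i, S i) :
    ∃ i, K ≤ S i := by
  obtain ⟨_, ⟨i, rfl⟩, hi⟩ :=
    (CompleteLattice.isCompactElement_iff_le_of_directed_sSup_le (α := Submodule R M) K).1
      ((Submodule.fg_iff_compact K).1 hK) (Set.range S) (Set.range_nonempty S) hS.directedOn_range h
  exact ⟨i, hi⟩

section TightClosureOfZero

variable {R : Type u} [CommRing R] {p : ℕ}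

theorem Ro.mul_mem {a b : R} (ha : a ∈ Ro R) (hb : b ∈ Ro R) : a * b ∈ Ro R := fun P hP hab =>
  (hP.1.1.mem_or_mem hab).elim (ha P hP) (hb P hP)

theorem Ro.one_mem : (1 : R) ∈ Ro R := fun P hP h1 =>
  hP.1.1.ne_top ((Ideal.eq_top_iff_one P).mpr h1)

theorem subset_idealTC (I : Ideal R) : (I : Set R) ⊆ idealTC R p I := fun a ha =>
  ⟨1, Ro.one_mem, 0, fun e _ => (one_mul (a ^ p ^ e)).symm ▸ Ideal.subset_span ⟨a, ha, rfl⟩⟩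

variable [ExpChar R p]

theorem FrobAlg.tmul_smul {N : Type v} [AddCommGroup N] [Module R N] {e : ℕ}
    (a : FrobAlg R p e) (r : R) (m : N) :
    a ⊗ₜ[R] (r • m) = (FrobAlg.mk R p e (r ^ p ^ e) * a) ⊗ₜ[R] m := by
  rw [TensorProduct.tmul_smul, TensorProduct.smul_tmul', Algebra.smul_def]
  rfl

variable (R p) in
noncomputable def frobKernel (N : Type v) [AddCommGroup N] [Module R N] (c : R) (e₀ : ℕ) :
    Submodule R N :=
  ⨅ (e : ℕ) (_ : e₀ ≤ e),
    LinearMap.ker (TensorProduct.mk R (FrobAlg R p e) N (FrobAlg.mk R p e c))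

variable {N : Type v} [AddCommGroup N] [Module R N] {N' : Type w} [AddCommGroup N'] [Module R N']

theorem mem_frobKernel {c : R} {e₀ : ℕ} {m : N} :
    m ∈ frobKernel R p N c e₀ ↔ ∀ e ≥ e₀, FrobAlg.mk R p e c ⊗ₜ[R] m = 0 := by
  simp [frobKernel]

theorem frobKernel_mono {c c' : R} {e₀ e₁ : ℕ} (hc : c ∣ c') (he : e₀ ≤ e₁) :
    frobKernel R p N c e₀ ≤ frobKernel R p N c' e₁ := fun m hm => by
  obtain ⟨d, rfl⟩ := hc
  rw [mem_frobKernel] at hm ⊢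
  intro e he'
  rw [show FrobAlg.mk R p e (c * d) = FrobAlg.mk R p e d * FrobAlg.mk R p e c from mul_comm _ _,
    ← smul_eq_mul, ← TensorProduct.smul_tmul', hm e (he.trans he'), smul_zero]

theorem map_frobKernel_le (φ : N →ₗ[R] N') (c : R) (e₀ : ℕ) :
    (frobKernel R p N c e₀).map φ ≤ frobKernel R p N' c e₀ := by
  rintro _ ⟨m, hm, rfl⟩
  rw [SetLike.mem_coe, mem_frobKernel] at hm
  rw [mem_frobKernel]
  intro e he
  simpa using congrArg (φ.lTensor (FrobAlg R p e)) (hm e he)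

theorem mem_moduleTC_bot_iff {m : N} :
    m ∈ moduleTC R p (⊥ : Submodule R N) ↔ ∃ c ∈ Ro R, ∃ e₀, m ∈ frobKernel R p N c e₀ := by
  have hbot (e : ℕ) : submoduleFrobPow R p (⊥ : Submodule R N) e = ⊥ := by
    rw [submoduleFrobPow, Subsingleton.elim (⊥ : Submodule R N).subtype 0, LinearMap.lTensor_zero,
      LinearMap.range_zero]
  simp [moduleTC, hbot, mem_frobKernel]

end TightClosureOfZero

section FinitisticTightClosureOfZero

variable {R : Type u} [CommRing R] {p : ℕ} [ExpChar R p]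
variable {N : Type v} [AddCommGroup N] [Module R N]

theorem mul_tmul_eq_zero_of_mem_frobeniusPower {e : ℕ} {a : FrobAlg R p e} {v : N} {I : Ideal R}
    (hv : ∀ y ∈ I, a ⊗ₜ[R] (y • v) = 0) {z : R} (hz : z ∈ frobeniusPower R I (p ^ e)) :
    (FrobAlg.mk R p e z * a) ⊗ₜ[R] v = 0 := by
  induction hz using Submodule.span_induction with
  | mem _ hz =>
    obtain ⟨y, hy, rfl⟩ := hz
    rw [← FrobAlg.tmul_smul]
    exact hv y hy
  | zero => exact (zero_mul a).symm ▸ TensorProduct.zero_tmul _ v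
  | add y z _ _ hy hz =>
    rw [show FrobAlg.mk R p e (y + z) = FrobAlg.mk R p e y + FrobAlg.mk R p e z from rfl,
      add_mul, TensorProduct.add_tmul, hy, hz, add_zero]
  | smul r z _ hz =>
    rw [show FrobAlg.mk R p e (r • z) * a = FrobAlg.mk R p e r • (FrobAlg.mk R p e z * a) from
      mul_assoc _ _ _, ← TensorProduct.smul_tmul', hz, smul_zero]

theorem smul_mem_frobKernel {I : Ideal R} {v : N} {c : R} {e₀ : ℕ}
    (hv : ∀ y ∈ I, y • v ∈ frobKernel R p N c e₀) {x d : R} {e₁ : ℕ}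
    (hx : ∀ e ≥ e₁, d * x ^ p ^ e ∈ frobeniusPower R I (p ^ e)) :
    x • v ∈ frobKernel R p N (d * c) (max e₀ e₁) := by
  refine mem_frobKernel.2 fun e he => ?_
  rw [FrobAlg.tmul_smul, show FrobAlg.mk R p e (x ^ p ^ e) * FrobAlg.mk R p e (d * c) =
    FrobAlg.mk R p e (d * x ^ p ^ e) * FrobAlg.mk R p e c from by
      change x ^ p ^ e * (d * c) = d * x ^ p ^ e * c; ring]
  exact mul_tmul_eq_zero_of_mem_frobeniusPower
    (fun y hy => mem_frobKernel.1 (hv y hy) e (le_of_max_le_left he)) (hx e (le_of_max_le_right he))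

instance : Nonempty (Ro R) := ⟨⟨1, Ro.one_mem⟩⟩

instance : Nonempty {M' : Submodule R N // M'.FG} := ⟨⟨⊥, Submodule.fg_bot⟩⟩

variable (R p N) in
noncomputable def finitisticTCBot : Submodule R N :=
  ⨆ i : {M' : Submodule R N // M'.FG} × Ro R × ℕ,
    (frobKernel R p i.1.1 i.2.1 i.2.2).map i.1.1.subtype

theorem map_subtype_frobKernel_mono {M₁ M₂ : Submodule R N} (h : M₁ ≤ M₂) (c : R) (e₀ : ℕ) :
    (frobKernel R p M₁ c e₀).map M₁.subtype ≤ (frobKernel R p M₂ c e₀).map M₂.subtype := by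
  rw [← Submodule.subtype_comp_inclusion M₁ M₂ h, Submodule.map_comp]
  exact Submodule.map_mono (map_frobKernel_le _ c e₀)

theorem directed_finitisticTCBot :
    Directed (· ≤ ·) fun i : {M' : Submodule R N // M'.FG} × Ro R × ℕ =>
      (frobKernel R p i.1.1 i.2.1 i.2.2).map i.1.1.subtype := by
  rintro ⟨⟨M₁, h₁⟩, c₁, e₁⟩ ⟨⟨M₂, h₂⟩, c₂, e₂⟩
  refine ⟨⟨⟨M₁ ⊔ M₂, h₁.sup h₂⟩, ⟨c₂ * c₁, Ro.mul_mem c₂.2 c₁.2⟩, max e₁ e₂⟩, ?_, ?_⟩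
  · exact (map_subtype_frobKernel_mono le_sup_left _ _).trans
      (Submodule.map_mono (frobKernel_mono (dvd_mul_left _ _) (le_max_left _ _)))
  · exact (map_subtype_frobKernel_mono le_sup_right _ _).trans
      (Submodule.map_mono (frobKernel_mono (dvd_mul_right _ _) (le_max_right _ _)))

theorem coe_finitisticTCBot :
    (finitisticTCBot R p N : Set N) = finitisticTC R p (⊥ : Submodule R N) := by
  rw [finitisticTCBot, Submodule.coe_iSup_of_directed _ directed_finitisticTCBot]
  ext z
  simp only [Set.mem_iUnion, SetLike.mem_coe, Submodule.mem_map, Submodule.subtype_apply,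
    finitisticTC, Submodule.comap_bot, Submodule.ker_subtype, Set.mem_image, mem_moduleTC_bot_iff]
  constructor
  · rintro ⟨⟨⟨M', hM'⟩, c, e₀⟩, z', hz', rfl⟩
    exact ⟨M', hM', z', ⟨c, c.2, e₀, hz'⟩, rfl⟩
  · rintro ⟨M', hM', z', ⟨c, hc, e₀, hz'⟩, rfl⟩
    exact ⟨⟨⟨M', hM'⟩, ⟨c, hc⟩, e₀⟩, z', hz', rfl⟩

theorem smul_mem_finitisticTCBot {I : Ideal R} (hI : I.FG) {u : N}
    (hu : ∀ a ∈ I, a • u ∈ finitisticTCBot R p N) {x : R} (hx : x ∈ idealTC R p I) :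
    x • u ∈ finitisticTCBot R p N := by
  obtain ⟨d, hd, e₁, hx⟩ := hx
  obtain ⟨⟨⟨M', hM'⟩, c, e₀⟩, hle⟩ :=
    (Submodule.FG.map (LinearMap.toSpanSingleton R N u) hI).exists_le_of_le_iSup
      directed_finitisticTCBot (Submodule.map_le_iff_le_comap.2 hu)
  let M'' := M' ⊔ R ∙ u
  have hu'' : u ∈ M'' := Submodule.mem_sup_right (Submodule.mem_span_singleton_self u)
  have hū : Submodule.map (LinearMap.toSpanSingleton R M'' ⟨u, hu''⟩) I ≤
      frobKernel R p M'' c e₀ := by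
    rw [← Submodule.map_le_map_iff_of_injective M''.injective_subtype, ← Submodule.map_comp,
      LinearMap.comp_toSpanSingleton]
    exact hle.trans (map_subtype_frobKernel_mono le_sup_left c.1 e₀)
  have hxū := smul_mem_frobKernel (Submodule.map_le_iff_le_comap.1 hū) hx
  exact Submodule.mem_iSup_of_mem
    ⟨⟨M'', hM'.sup (Submodule.fg_span_singleton u)⟩, ⟨d * c, Ro.mul_mem hd c.2⟩, max e₀ e₁⟩
    (Submodule.mem_map_of_mem hxū)

end FinitisticTightClosureOfZero

section InjectiveHull

variable {R : Type u} [CommRing R] {M : Type v} [AddCommGroup M] [Module R M]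
  {E : Type w} [AddCommGroup E] [Module R E]

theorem Module.Baer.exists_comp_eq_of_ker_le {X : Type*} [AddCommGroup X] [Module R X]
    (hE : Module.Baer R E) (g : M →ₗ[R] X) (h : M →ₗ[R] E)
    (hker : LinearMap.ker g ≤ LinearMap.ker h) : ∃ G : X →ₗ[R] E, G ∘ₗ g = h := by
  obtain ⟨G, hG⟩ := hE.extension_property ((LinearMap.ker g).liftQ g le_rfl)
    (LinearMap.ker_eq_bot.1 (Submodule.ker_liftQ_eq_bot _ _ _ le_rfl))
    ((LinearMap.ker g).liftQ h hker)
  exact ⟨G, LinearMap.ext fun u => by simpa using LinearMap.congr_fun hG (Submodule.Quotient.mk u)⟩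

theorem mem_smul_annihilatorIn_of_forall_smul_mem (hE : Module.Baer R E) (N₀ : Submodule R M)
    {I : Ideal R} (hI : I.FG) {h : M →ₗ[R] E} (hh : ∀ u, (∀ a ∈ I, a • u ∈ N₀) → h u = 0) :
    h ∈ I • annihilatorIn R (E := E) (N₀ : Set M) := by
  obtain ⟨n, a, rfl⟩ := Submodule.fg_iff_exists_fin_generating_family.1 hI
  let g : M →ₗ[R] Fin n → M ⧸ N₀ := LinearMap.pi fun i => N₀.mkQ ∘ₗ (a i • LinearMap.id)
  obtain ⟨G, hG⟩ := hE.exists_comp_eq_of_ker_le g h fun u hu => by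
    have hi (i : Fin n) : a i • u ∈ N₀ := (Submodule.Quotient.mk_eq_zero N₀).1 (congrFun hu i)
    exact hh u fun b hb =>
      (Submodule.span_le (p := N₀.comap (LinearMap.toSpanSingleton R M u))).2
        (Set.range_subset_iff.2 hi) hb
  have hsum : h = ∑ i, a i • (G ∘ₗ LinearMap.single R (fun _ => M ⧸ N₀) i ∘ₗ N₀.mkQ) := by
    rw [← hG]
    ext u
    simp only [LinearMap.comp_apply, LinearMap.sum_apply, LinearMap.smul_apply, ← map_smul,
      ← map_sum]
    congr 1
    ext i
    simp [g, Pi.single_apply]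
  rw [hsum]
  refine Submodule.sum_mem _ fun i _ =>
    Submodule.smul_mem_smul (Submodule.subset_span ⟨i, rfl⟩) fun z hz => ?_
  simp [(Submodule.Quotient.mk_eq_zero N₀).2 hz]

end InjectiveHull

theorem tight_closure_strong_test_module_fg_general
    (R : Type u) [CommRing R] [IsNoetherianRing R] [IsLocalRing R]
    (p : ℕ) [Fact p.Prime] [CharP R p]
    [IsAdicComplete (IsLocalRing.maximalIdeal R) R]
    (M : Type v) [AddCommGroup M] [Module R M]
    (E : Type w) [AddCommGroup E] [Module R E]
    (hE : IsInjectiveHull R (IsLocalRing.ResidueField R) E)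
    (I : Ideal R) :
    setSMulSubmodule R (idealTC R p I)
        (annihilatorIn R (E := E) (finitisticTC R p (⊥ : Submodule R M))) =
      I • annihilatorIn R (E := E) (finitisticTC R p (⊥ : Submodule R M)) := by
  obtain ⟨hinj, ι, hι, -⟩ := hE
  have : Small.{w} (R ⧸ IsLocalRing.maximalIdeal R) := small_of_injective hι
  have : Small.{w} R :=
    small_of_isHausdorff (IsNoetherian.noetherian (IsLocalRing.maximalIdeal R))
  have hBaer : Module.Baer R E := Module.Baer.of_injective hinj
  rw [← coe_finitisticTCBot]
  refine le_antisymm (Submodule.span_le.2 ?_) (Submodule.smul_le.2 fun r hr f hf => ?_)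
  · rintro _ ⟨x, hx, f, hf, rfl⟩
    refine mem_smul_annihilatorIn_of_forall_smul_mem hBaer _ (IsNoetherian.noetherian I)
      fun u hu => ?_
    rw [LinearMap.smul_apply, ← map_smul]
    exact hf _ (smul_mem_finitisticTCBot (IsNoetherian.noetherian I) hu hx)
  · exact Submodule.subset_span (Set.smul_mem_smul (subset_idealTC I hr) hf)

/-- For a complete Noetherian local ring `(R,m,K)` of prime
characteristic `p` possessing a test element, and an Artinian `R`-module `M`, the module
`τ^{fg}_M = Ann_{M^∨}(0*fg_M) ⊆ M^∨ = Hom_R(M, E_R(K))` satisfies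
`I* · τ^{fg}_M = I · τ^{fg}_M` for every ideal `I` of `R`. -/
theorem tight_closure_strong_test_module_fg
    (R : Type u) [CommRing R] [IsNoetherianRing R] [IsLocalRing R]
    (p : ℕ) [Fact p.Prime] [CharP R p]
    [IsAdicComplete (IsLocalRing.maximalIdeal R) R]
    (htest : ∃ c : R, IsTestElement R p c)
    (M : Type v) [AddCommGroup M] [Module R M] [IsArtinian R M]
    (E : Type w) [AddCommGroup E] [Module R E]
    (hE : IsInjectiveHull R (IsLocalRing.ResidueField R) E)
    (I : Ideal R) :
    setSMulSubmodule R (idealTC R p I)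
        (annihilatorIn R (E := E) (finitisticTC R p (⊥ : Submodule R M))) =
      I • annihilatorIn R (E := E) (finitisticTC R p (⊥ : Submodule R M)) :=
  tight_closure_strong_test_module_fg_general R p M E hE I
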